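/- arXiv:2512.17272 — 2 statements merged into one kernel-verified Lean document; each statement's English description precedes it below -/
import Mathlib

section
/- Let v : ℝ → ℂ² be continuous and suppose that for every λ ∈ ℂ a differentiable matrix function y(·,λ) : [0,1] → M₃(ℂ) is given with y(0,λ) = 𝟙₃ and iJ·∂ₓy(x,λ) + V(v(x))·y(x,λ) = λ·y(x,λ) for all x ∈ [0,1]. Then for all x ∈ [0,1] and λ ∈ ℂ the Wronskian identity y(x, conj λ)* · J · y(x,λ) = J holds; in particular, y(x,λ) is invertible and y(x,λ)⁻¹ = J · y(x, conj λ)* · J. -/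
/-!
The Wronskian `W(x) = y(x, conj λ)ᴴ J y(x, λ)` is constant: differentiating and substituting
`J y' = -i (λ - V) y` and its adjoint (`J` and `V(v(x))` are Hermitian) makes the two terms cancel.
Hence `W(x) = W(0) = J`, and since `J² = 1` this exhibits `J y(x, conj λ)ᴴ J` as a left, hence
two-sided, inverse of `y(x, λ)`.
-/

open MeasureTheory Complex Matrix

attribute [local instance] Matrix.normedAddCommGroup Matrix.normedSpace

noncomputable section

/-- `J = diag(1,-1,-1)`. -/
def Jmat : Matrix (Fin 3) (Fin 3) ℂ := Matrix.diagonal ![1, -1, -1]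

/-- The 3×3 matrix `V(a) = [[0, a*],[a, 0]]` for `a = (a₁,a₂) ∈ ℂ²`. -/
def Vmat (a₁ a₂ : ℂ) : Matrix (Fin 3) (Fin 3) ℂ :=
  !![0, (starRingEnd ℂ) a₁, (starRingEnd ℂ) a₂; a₁, 0, 0; a₂, 0, 0]

namespace Matrix

variable {𝕜 : Type*} [NontriviallyNormedField 𝕜] {l m n : Type*} [Fintype l] [Fintype n]

theorem hasDerivAt_iff_apply [Fintype m] {E : Type*} [NormedAddCommGroup E] [NormedSpace 𝕜 E]
    {A : 𝕜 → Matrix m n E} {A' : Matrix m n E} {x : 𝕜} :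
    HasDerivAt A A' x ↔ ∀ i j, HasDerivAt (fun t => A t i j) (A' i j) x :=
  hasDerivAt_pi.trans (forall_congr' fun _ => hasDerivAt_pi)

theorem _root_.HasDerivAt.matrix_mul [Fintype m] {𝔸 : Type*} [NormedRing 𝔸] [NormedAlgebra 𝕜 𝔸]
    {A : 𝕜 → Matrix l m 𝔸} {B : 𝕜 → Matrix m n 𝔸} {A' : Matrix l m 𝔸} {B' : Matrix m n 𝔸} {x : 𝕜}
    (hA : HasDerivAt A A' x) (hB : HasDerivAt B B' x) :
    HasDerivAt (fun t => A t * B t) (A' * B x + A x * B') x := by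
  rw [hasDerivAt_iff_apply] at *
  intro i j
  simpa only [mul_apply, add_apply, Finset.sum_add_distrib] using
    HasDerivAt.fun_sum fun k _ => (hA i k).fun_mul (hB k j)

end Matrix

theorem Jmat_isHermitian : Jmat.IsHermitian :=
  isHermitian_diagonal_of_self_adjoint _ (by ext i; fin_cases i <;> simp)

theorem Jmat_mul_self : Jmat * Jmat = 1 := by
  rw [Jmat, diagonal_mul_diagonal, ← diagonal_one]
  congr 1
  ext i; fin_cases i <;> simp

theorem Vmat_isHermitian (a₁ a₂ : ℂ) : (Vmat a₁ a₂).IsHermitian := by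
  ext i j
  fin_cases i <;> fin_cases j <;> simp [Vmat]

section Wronskian

variable {n : Type*} [Fintype n] {J : Matrix n n ℂ}

theorem conjTranspose_deriv_mul_mul_add_eq_zero (hJ : J.IsHermitian) {V u w u' w' : Matrix n n ℂ}
    (hV : V.IsHermitian) {lam : ℂ}
    (hu : I • (J * u') + V * u = starRingEnd ℂ lam • u) (hw : I • (J * w') + V * w = lam • w) :
    u'ᴴ * J * w + uᴴ * J * w' = 0 := by
  have hu_adj : (-I) • (u'ᴴ * J) + uᴴ * V = lam • uᴴ := by
    simpa [conjTranspose_mul, hJ.eq, hV.eq] using congrArg conjTranspose hu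
  have e₁ := congrArg (· * w) hu_adj
  have e₂ := congrArg (uᴴ * ·) hw
  have h : I • (u'ᴴ * J * w + uᴴ * J * w') = 0 := by
    simp only [add_mul, mul_add, smul_mul, Matrix.mul_smul, Matrix.mul_assoc] at e₁ e₂ ⊢
    linear_combination (norm := module) e₂ - e₁
  exact (smul_eq_zero.mp h).resolve_left I_ne_zero

theorem conjTranspose_mul_mul_eq_of_hasDerivAt (hJ : J.IsHermitian) {V : ℝ → Matrix n n ℂ}
    (hV : ∀ t, (V t).IsHermitian) {a b : ℝ} {lam : ℂ} {u w u' w' : ℝ → Matrix n n ℂ}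
    (hu : ∀ t ∈ Set.Icc a b, HasDerivAt u (u' t) t) (hw : ∀ t ∈ Set.Icc a b, HasDerivAt w (w' t) t)
    (hu_ode : ∀ t ∈ Set.Icc a b, I • (J * u' t) + V t * u t = starRingEnd ℂ lam • u t)
    (hw_ode : ∀ t ∈ Set.Icc a b, I • (J * w' t) + V t * w t = lam • w t) :
    ∀ t ∈ Set.Icc a b, (u t)ᴴ * J * w t = (u a)ᴴ * J * w a := by
  have hderiv : ∀ t ∈ Set.Icc a b,
      HasDerivAt (fun s => (u s)ᴴ * J * w s) ((u' t)ᴴ * J * w t + (u t)ᴴ * J * w' t) t := by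
    intro t ht
    simpa [star_eq_conjTranspose] using
      ((hu t ht).star.matrix_mul (hasDerivAt_const t J)).matrix_mul (hw t ht)
  refine constant_of_has_deriv_right_zero
    (fun t ht => (hderiv t ht).continuousAt.continuousWithinAt) fun t ht => ?_
  have ht := Set.Ico_subset_Icc_self ht
  simpa [conjTranspose_deriv_mul_mul_add_eq_zero hJ (hV t) (hu_ode t ht) (hw_ode t ht)]
    using (hderiv t ht).hasDerivWithinAt

end Wronskian

theorem statement5_general (v₁ v₂ : ℝ → ℂ)
    (y y' : ℝ → ℂ → Matrix (Fin 3) (Fin 3) ℂ)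
    (hderiv : ∀ (lam : ℂ), ∀ x ∈ Set.Icc (0:ℝ) 1,
      HasDerivAt (fun t => y t lam) (y' x lam) x)
    (h0 : ∀ lam : ℂ, y 0 lam = 1)
    (hode : ∀ (lam : ℂ), ∀ x ∈ Set.Icc (0:ℝ) 1,
      Complex.I • (Jmat * y' x lam) + Vmat (v₁ x) (v₂ x) * y x lam = lam • y x lam) :
    ∀ (lam : ℂ), ∀ x ∈ Set.Icc (0:ℝ) 1,
      (y x ((starRingEnd ℂ) lam))ᴴ * Jmat * y x lam = Jmat ∧
      IsUnit (y x lam) ∧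
      y x lam * (Jmat * (y x ((starRingEnd ℂ) lam))ᴴ * Jmat) = 1 ∧
      (Jmat * (y x ((starRingEnd ℂ) lam))ᴴ * Jmat) * y x lam = 1 := by
  intro lam x hx
  have hW : (y x (starRingEnd ℂ lam))ᴴ * Jmat * y x lam = Jmat := by
    simpa [h0] using conjTranspose_mul_mul_eq_of_hasDerivAt Jmat_isHermitian
      (fun t => Vmat_isHermitian (v₁ t) (v₂ t)) (hderiv _) (hderiv lam)
      (hode _) (hode lam) x hx
  have hleft : (Jmat * (y x (starRingEnd ℂ lam))ᴴ * Jmat) * y x lam = 1 := by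
    rw [Matrix.mul_assoc, Matrix.mul_assoc, ← Matrix.mul_assoc _ Jmat, hW, Jmat_mul_self]
  exact ⟨hW, .of_mul_eq_one_right _ hleft, mul_eq_one_comm.mp hleft, hleft⟩

/-- Wronskian identity: `y(x, conj λ)* · J · y(x,λ) = J`; in particular `y(x,λ)` is
invertible with inverse `J · y(x, conj λ)* · J`. -/
theorem statement5 (v₁ v₂ : ℝ → ℂ) (hv₁ : Continuous v₁) (hv₂ : Continuous v₂)
    (y y' : ℝ → ℂ → Matrix (Fin 3) (Fin 3) ℂ)
    (hderiv : ∀ (lam : ℂ), ∀ x ∈ Set.Icc (0:ℝ) 1,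
      HasDerivAt (fun t => y t lam) (y' x lam) x)
    (h0 : ∀ lam : ℂ, y 0 lam = 1)
    (hode : ∀ (lam : ℂ), ∀ x ∈ Set.Icc (0:ℝ) 1,
      Complex.I • (Jmat * y' x lam) + Vmat (v₁ x) (v₂ x) * y x lam = lam • y x lam) :
    ∀ (lam : ℂ), ∀ x ∈ Set.Icc (0:ℝ) 1,
      (y x ((starRingEnd ℂ) lam))ᴴ * Jmat * y x lam = Jmat ∧
      IsUnit (y x lam) ∧
      y x lam * (Jmat * (y x ((starRingEnd ℂ) lam))ᴴ * Jmat) = 1 ∧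
      (Jmat * (y x ((starRingEnd ℂ) lam))ᴴ * Jmat) * y x lam = 1 :=
  statement5_general v₁ v₂ y y' hderiv h0 hode
end
end

section
/- Let v : [0,1] → ℂ² be continuously differentiable and let λ ∈ ℂ satisfy |λ| ≥ sup_{x∈[0,1]} |v(x)|. Define W(s) = i·J·V(v(s))² − V(v′(s)) and a_s(λ) = (𝟙₃ − V(v(s))/(2λ))⁻¹, and define the iterates X₀(x,λ) = e^{−iλxJ}, Xₙ(x,λ) = ∫₀ˣ e^{iλ(s−x)J} · W(s) · a_s(λ) · X_{n−1}(s,λ) ds for n ≥ 1. Then for every n ≥ 0 and x ∈ [0,1]: ‖Xₙ(x,λ)‖ ≤ (2ⁿ/n!) · e^{x|Im λ|} · (∫₀ˣ ‖W(s)‖ ds)ⁿ. -/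
/-! Induction on `n`. As `J` is diagonal, `‖e^{cJ}‖ ≤ e^{|Re c|}`, so the propagator
`e^{iλ(s-x)J}` costs `e^{(x-s)|Im λ|}`, which combines with the factor `e^{s|Im λ|}` of the
induction hypothesis into `e^{x|Im λ|}`. The hypothesis on `λ` gives `‖V(v(s))/(2λ)‖ ≤ 1/2`,
hence `‖a_s(λ)‖ ≤ 2` by the Neumann series. Finally, with `F(x) = ∫₀ˣ ‖W‖`, the remaining
integral is `∫₀ˣ ‖W(s)‖ F(s)ⁿ ds = F(x)ⁿ⁺¹/(n+1)`.

No integrability of the iterates is ever needed: a non-integrable integrand has integral `0`,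
which satisfies every nonnegative bound. -/

open MeasureTheory Complex Matrix

attribute [local instance] Matrix.normedAddCommGroup Matrix.normedSpace

noncomputable section

/-- Operator norm of a 3×3 complex matrix, acting on Euclidean `ℂ³`. -/
def opNorm (A : Matrix (Fin 3) (Fin 3) ℂ) : ℝ :=
  ‖Matrix.toEuclideanCLM (𝕜 := ℂ) (n := Fin 3) A‖

def toEuclideanCLE :
    Matrix (Fin 3) (Fin 3) ℂ ≃L[ℂ] (EuclideanSpace ℂ (Fin 3) →L[ℂ] EuclideanSpace ℂ (Fin 3)) :=
  (toEuclideanLin.trans LinearMap.toContinuousLinearMap).toContinuousLinearEquiv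

lemma opNorm_eq_norm_toEuclideanCLE (A : Matrix (Fin 3) (Fin 3) ℂ) :
    opNorm A = ‖toEuclideanCLE A‖ := rfl

lemma continuous_opNorm : Continuous opNorm := toEuclideanCLE.continuous.norm

lemma opNorm_nonneg (A : Matrix (Fin 3) (Fin 3) ℂ) : 0 ≤ opNorm A := norm_nonneg _

lemma opNorm_mul_le (A B : Matrix (Fin 3) (Fin 3) ℂ) : opNorm (A * B) ≤ opNorm A * opNorm B := by
  rw [opNorm, map_mul]
  exact norm_mul_le _ _

lemma opNorm_smul (c : ℂ) (A : Matrix (Fin 3) (Fin 3) ℂ) : opNorm (c • A) = ‖c‖ * opNorm A := by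
  rw [opNorm, map_smul]
  exact norm_smul c _

lemma opNorm_intervalIntegral_le {f : ℝ → Matrix (Fin 3) (Fin 3) ℂ} {a b : ℝ} (hab : a ≤ b) :
    opNorm (∫ s in a..b, f s) ≤ ∫ s in a..b, opNorm (f s) := by
  rw [intervalIntegral.integral_of_le hab, intervalIntegral.integral_of_le hab,
    opNorm_eq_norm_toEuclideanCLE]
  calc ‖toEuclideanCLE (∫ s in Set.Ioc a b, f s)‖
      = ‖∫ s in Set.Ioc a b, toEuclideanCLE (f s)‖ :=
        congrArg _ (toEuclideanCLE.integral_comp_comm f).symm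
    _ ≤ _ := norm_integral_le_integral_norm _

lemma opNorm_le_of_sum_sq_le {A : Matrix (Fin 3) (Fin 3) ℂ} {M : ℝ} (hM : 0 ≤ M)
    (h : ∀ x : Fin 3 → ℂ, ∑ i, ‖(A *ᵥ x) i‖ ^ 2 ≤ M ^ 2 * ∑ i, ‖x i‖ ^ 2) : opNorm A ≤ M := by
  refine ContinuousLinearMap.opNorm_le_bound _ hM fun x => ?_
  rw [← pow_le_pow_iff_left₀ (norm_nonneg _) (by positivity) two_ne_zero, mul_pow,
    EuclideanSpace.norm_sq_eq, EuclideanSpace.norm_sq_eq]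
  exact h x

lemma opNorm_diagonal_le {d : Fin 3 → ℂ} {M : ℝ} (hM : 0 ≤ M) (hd : ∀ i, ‖d i‖ ≤ M) :
    opNorm (diagonal d) ≤ M := by
  refine opNorm_le_of_sum_sq_le hM fun x => ?_
  simp only [mulVec_diagonal, norm_mul, mul_pow, Finset.mul_sum]
  gcongr with i
  exact hd i

lemma exp_smul_Jmat (c : ℂ) :
    NormedSpace.exp (c • Jmat) = diagonal ![Complex.exp c, Complex.exp (-c), Complex.exp (-c)] := by
  rw [Jmat, ← diagonal_smul, exp_diagonal]
  congr 1
  ext i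
  fin_cases i <;> simp [Complex.exp_eq_exp_ℂ]

lemma opNorm_exp_smul_Jmat_le (c : ℂ) : opNorm (NormedSpace.exp (c • Jmat)) ≤ Real.exp |c.re| := by
  rw [exp_smul_Jmat]
  refine opNorm_diagonal_le (Real.exp_nonneg _) fun i => ?_
  fin_cases i <;> simp [Complex.norm_exp, le_abs_self, neg_le_abs]

lemma opNorm_Vmat_le (a₁ a₂ : ℂ) : opNorm (Vmat a₁ a₂) ≤ √(‖a₁‖ ^ 2 + ‖a₂‖ ^ 2) := by
  refine opNorm_le_of_sum_sq_le (Real.sqrt_nonneg _) fun x => ?_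
  have hcs : ‖starRingEnd ℂ a₁ * x 1 + starRingEnd ℂ a₂ * x 2‖ ≤ ‖a₁‖ * ‖x 1‖ + ‖a₂‖ * ‖x 2‖ :=
    (norm_add_le _ _).trans (by simp only [norm_mul, RCLike.norm_conj, le_refl])
  have hcs2 := pow_le_pow_left₀ (norm_nonneg _) hcs 2
  simp only [mulVec, dotProduct, Vmat, of_apply, cons_val', cons_val_fin_one, Fin.sum_univ_three,
    Fin.isValue, cons_val_zero, cons_val_one, cons_val, zero_mul, zero_add, add_zero, norm_mul]
  rw [Real.sq_sqrt (by positivity)]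
  nlinarith [sq_nonneg (‖a₁‖ * ‖x 2‖ - ‖a₂‖ * ‖x 1‖)]

lemma opNorm_inv_one_sub_le {A : Matrix (Fin 3) (Fin 3) ℂ} (hA : opNorm A < 1) :
    opNorm (1 - A)⁻¹ ≤ (1 - opNorm A)⁻¹ := by
  set Φ := toEuclideanCLM (𝕜 := ℂ) (n := Fin 3)
  set U := Units.oneSub (Φ A) hA
  have hinv : (1 - A)⁻¹ = Φ.symm ↑U⁻¹ := by
    refine inv_eq_right_inv (Φ.injective ?_)
    have hΦ : Φ.toRingEquiv (Φ.symm ↑U⁻¹) = ↑U⁻¹ := Φ.apply_symm_apply _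
    rw [map_mul, map_sub, map_one, hΦ]
    exact U.mul_inv
  rw [hinv, opNorm, StarAlgEquiv.apply_symm_apply]
  exact (tsum_geometric_le_of_norm_lt_one (Φ A) hA).trans_eq
    (by rw [norm_one, sub_self, zero_add]; rfl)

lemma opNorm_resolvent_le {lam a₁ a₂ : ℂ} (h : √(‖a₁‖ ^ 2 + ‖a₂‖ ^ 2) ≤ ‖lam‖) :
    opNorm (1 - (2 * lam)⁻¹ • Vmat a₁ a₂)⁻¹ ≤ 2 := by
  have hsmall : opNorm ((2 * lam)⁻¹ • Vmat a₁ a₂) ≤ 1 / 2 := by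
    rw [opNorm_smul, norm_inv, norm_mul, Complex.norm_two]
    calc (2 * ‖lam‖)⁻¹ * opNorm (Vmat a₁ a₂) ≤ (2 * ‖lam‖)⁻¹ * ‖lam‖ := by
          gcongr
          exact (opNorm_Vmat_le a₁ a₂).trans h
      _ = 2⁻¹ * (‖lam‖⁻¹ * ‖lam‖) := by rw [mul_inv, mul_assoc]
      _ ≤ 1 / 2 := by
          rw [one_div]
          exact mul_le_of_le_one_right (by norm_num) (inv_mul_le_one_of_le₀ le_rfl (norm_nonneg _))
  calc opNorm (1 - (2 * lam)⁻¹ • Vmat a₁ a₂)⁻¹ ≤ (1 - opNorm ((2 * lam)⁻¹ • Vmat a₁ a₂))⁻¹ :=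
        opNorm_inv_one_sub_le (by linarith)
    _ ≤ 2 := by
        rw [inv_le_comm₀ (by linarith) two_pos]
        linarith

lemma continuous_Vmat {f g : ℝ → ℂ} (hf : Continuous f) (hg : Continuous g) :
    Continuous fun s => Vmat (f s) (g s) := by
  unfold Vmat
  fun_prop

lemma integral_mul_pow_primitive {w : ℝ → ℝ} (hw : Continuous w) (n : ℕ) (x : ℝ) :
    ∫ s in (0:ℝ)..x, w s * (∫ t in (0:ℝ)..s, w t) ^ n =
      (∫ t in (0:ℝ)..x, w t) ^ (n + 1) / (n + 1) := by
  have hF : ∀ s ∈ Set.uIcc (0:ℝ) x, HasDerivAt (fun s => ∫ t in (0:ℝ)..s, w t) (w s) s :=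
    fun s _ => intervalIntegral.integral_hasDerivAt_right (hw.intervalIntegrable _ _)
      (hw.stronglyMeasurableAtFilter _ _) hw.continuousAt
  have hsubst := intervalIntegral.integral_comp_mul_deriv hF hw.continuousOn (continuous_pow n)
  simp only [Function.comp_def, intervalIntegral.integral_same, integral_pow] at hsubst
  simp_rw [mul_comm (w _), hsubst]
  simp

lemma intervalIntegral_mono_of_nonneg {f g : ℝ → ℝ} {a b : ℝ} (hab : a ≤ b) (hf : ∀ s, 0 ≤ f s)
    (hg : IntervalIntegrable g volume a b) (hfg : ∀ s ∈ Set.Icc a b, f s ≤ g s) :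
    ∫ s in a..b, f s ≤ ∫ s in a..b, g s := by
  rw [intervalIntegral.integral_of_le hab, intervalIntegral.integral_of_le hab]
  refine integral_mono_of_nonneg (ae_of_all _ hf) hg.1 ?_
  exact (ae_restrict_mem measurableSet_Ioc).mono fun s hs => hfg s (Set.Ioc_subset_Icc_self hs)

lemma abs_re_I_mul_mul_ofReal (lam : ℂ) (t : ℝ) : |(I * lam * t).re| = |lam.im| * |t| := by
  simp [Complex.mul_re, abs_mul]

lemma opNorm_exp_smul_Jmat_ofReal_le (lam : ℂ) (t : ℝ) :
    opNorm (NormedSpace.exp ((I * lam * t) • Jmat)) ≤ Real.exp (|t| * |lam.im|) :=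
  (opNorm_exp_smul_Jmat_le _).trans_eq (by rw [abs_re_I_mul_mul_ofReal, mul_comm])

lemma opNorm_exp_smul_Jmat_sub_mul_le (lam : ℂ) {s x : ℝ} (hsx : s ≤ x)
    (M : Matrix (Fin 3) (Fin 3) ℂ) :
    opNorm (NormedSpace.exp ((I * lam * (s - x)) • Jmat) * M) ≤
      Real.exp ((x - s) * |lam.im|) * opNorm M := by
  have hexp := opNorm_exp_smul_Jmat_ofReal_le lam (s - x)
  rw [ofReal_sub, abs_of_nonpos (by linarith), neg_sub] at hexp
  exact (opNorm_mul_le _ _).trans (mul_le_mul_of_nonneg_right hexp (opNorm_nonneg _))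

lemma opNorm_integral_exp_smul_Jmat_mul_le {lam : ℂ} {W a Y : ℝ → Matrix (Fin 3) (Fin 3) ℂ}
    (hW : Continuous W) {n : ℕ} {x : ℝ} (hx : 0 ≤ x)
    (ha : ∀ s ∈ Set.Icc 0 x, opNorm (a s) ≤ 2)
    (hY : ∀ s ∈ Set.Icc 0 x, opNorm (Y s) ≤
      2 ^ n / n.factorial * Real.exp (s * |lam.im|) * (∫ t in (0:ℝ)..s, opNorm (W t)) ^ n) :
    opNorm (∫ s in (0:ℝ)..x,
        NormedSpace.exp ((I * lam * (s - x)) • Jmat) * (W s * (a s * Y s))) ≤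
      2 ^ (n + 1) / (n + 1).factorial * Real.exp (x * |lam.im|) *
        (∫ t in (0:ℝ)..x, opNorm (W t)) ^ (n + 1) := by
  set F := fun s => ∫ t in (0:ℝ)..s, opNorm (W t)
  set C := 2 ^ (n + 1) / n.factorial * Real.exp (x * |lam.im|)
  have hw : Continuous fun s => opNorm (W s) := continuous_opNorm.comp hW
  have hpointwise : ∀ s ∈ Set.Icc 0 x,
      opNorm (NormedSpace.exp ((I * lam * (s - x)) • Jmat) * (W s * (a s * Y s))) ≤
        C * (opNorm (W s) * F s ^ n) := by
    intro s hs
    calc _ ≤ Real.exp ((x - s) * |lam.im|) * opNorm (W s * (a s * Y s)) :=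
          opNorm_exp_smul_Jmat_sub_mul_le lam hs.2 _
      _ ≤ Real.exp ((x - s) * |lam.im|) * (opNorm (W s) *
            (2 * (2 ^ n / n.factorial * Real.exp (s * |lam.im|) * F s ^ n))) := by
          refine mul_le_mul_of_nonneg_left ((opNorm_mul_le _ _).trans ?_) (Real.exp_nonneg _)
          refine mul_le_mul_of_nonneg_left ((opNorm_mul_le _ _).trans ?_) (opNorm_nonneg _)
          exact mul_le_mul (ha s hs) (hY s hs) (opNorm_nonneg _) zero_le_two
      _ = C * (opNorm (W s) * F s ^ n) := by
          have hexp_add : Real.exp ((x - s) * |lam.im|) * Real.exp (s * |lam.im|) =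
              Real.exp (x * |lam.im|) := by
            rw [← Real.exp_add]
            ring_nf
          simp only [C, ← hexp_add]
          ring
  calc _ ≤ ∫ s in (0:ℝ)..x, opNorm
        (NormedSpace.exp ((I * lam * (s - x)) • Jmat) * (W s * (a s * Y s))) :=
        opNorm_intervalIntegral_le hx
    _ ≤ ∫ s in (0:ℝ)..x, C * (opNorm (W s) * F s ^ n) :=
        intervalIntegral_mono_of_nonneg hx (fun _ => opNorm_nonneg _)
          ((continuous_const.mul (hw.mul ((intervalIntegral.continuous_primitive
            hw.intervalIntegrable 0).pow n))).intervalIntegrable _ _)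
          hpointwise
    _ = C * (F x ^ (n + 1) / (n + 1)) := by
        rw [intervalIntegral.integral_const_mul, integral_mul_pow_primitive hw]
    _ = _ := by
        simp only [C, F, Nat.factorial_succ]
        push_cast
        field_simp

/-- Bounds `‖Xₙ(x,λ)‖ ≤ (2ⁿ/n!)·e^{x|Im λ|}·(∫₀ˣ ‖W(s)‖ ds)ⁿ` for the modified
iterates, where `W = iJV² − V′` and `a_s(λ) = (𝟙 − V(v(s))/(2λ))⁻¹`. -/
theorem statement14 (v₁ v₂ : ℝ → ℂ) (hv₁ : ContDiff ℝ 1 v₁) (hv₂ : ContDiff ℝ 1 v₂)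
    (lam : ℂ)
    (hlam : ∀ x ∈ Set.Icc (0:ℝ) 1, Real.sqrt (‖v₁ x‖ ^ 2 + ‖v₂ x‖ ^ 2) ≤ ‖lam‖)
    (W : ℝ → Matrix (Fin 3) (Fin 3) ℂ)
    (hW : ∀ s : ℝ, W s = Complex.I • (Jmat * (Vmat (v₁ s) (v₂ s) * Vmat (v₁ s) (v₂ s)))
      - Vmat (deriv v₁ s) (deriv v₂ s))
    (X : ℕ → ℝ → Matrix (Fin 3) (Fin 3) ℂ)
    (hX0 : ∀ x : ℝ, X 0 x = NormedSpace.exp ((-(Complex.I * lam * x)) • Jmat))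
    (hXn : ∀ (n : ℕ) (x : ℝ), X (n + 1) x =
      ∫ s in (0:ℝ)..x,
        NormedSpace.exp ((Complex.I * lam * (s - x)) • Jmat) *
          (W s * ((1 - (2 * lam)⁻¹ • Vmat (v₁ s) (v₂ s))⁻¹ * X n s))) :
    ∀ (n : ℕ), ∀ x ∈ Set.Icc (0:ℝ) 1,
      opNorm (X n x) ≤ (2 ^ n / n.factorial) * Real.exp (x * |lam.im|) *
        (∫ s in (0:ℝ)..x, opNorm (W s)) ^ n := by
  have hWc : Continuous W := by
    have hV := continuous_Vmat hv₁.continuous hv₂.continuous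
    have hV' := continuous_Vmat (hv₁.continuous_deriv le_rfl) (hv₂.continuous_deriv le_rfl)
    rw [funext hW]
    fun_prop
  intro n
  induction n with
  | zero =>
    intro x hx
    have h := opNorm_exp_smul_Jmat_ofReal_le lam (-x)
    rw [abs_neg, abs_of_nonneg hx.1, ofReal_neg, mul_neg] at h
    simpa [hX0] using h
  | succ n ih =>
    intro x hx
    have hIcc : Set.Icc 0 x ⊆ Set.Icc (0:ℝ) 1 := Set.Icc_subset_Icc_right hx.2
    rw [hXn]
    exact opNorm_integral_exp_smul_Jmat_mul_le hWc hx.1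
      (fun s hs => opNorm_resolvent_le (hlam s (hIcc hs))) (fun s hs => ih s (hIcc hs))
end
end
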